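/- Let L be a language with a binary connective ∨, F the set of all wffs of L, and ⟨F, 𝒱, ⊨⟩ a semantic structure satisfying (A4). Then a relation |~ on P(F) × F is a universe-codefinable pivotal consequence relation if and only if it is a closed pertinence consequence relation (i.e., a closed X-logic). -/
import Mathlib


/-- The set of models of a set of formulas `Γ`. -/
def modSet {F V : Type*} (sat : V → F → Prop) (Γ : Set F) : Set V :=
  {v | ∀ α ∈ Γ, sat v α}

/-- The set of formulas satisfied in every valuation of `S`. -/
def thSet {F V : Type*} (sat : V → F → Prop) (S : Set V) : Set F :=
  {α | S ⊆ modSet sat {α}}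

/-- `D`: the family of definable sets of valuations. -/
def defFam {F V : Type*} (sat : V → F → Prop) : Set (Set V) :=
  {S | ∃ Γ : Set F, modSet sat Γ = S}

/-- The basic consequence operator `C_⊢(Γ) = Th(Mod(Γ))`. -/
def cnsq {F V : Type*} (sat : V → F → Prop) (Γ : Set F) : Set F :=
  thSet sat (modSet sat Γ)

/-- `|~` is a universe-codefinable pivotal consequence relation: there is a strongly
coherent, universe-codefinable choice function `μ` from `D` to `P(𝒱)` defining it. -/
def isPivotalUC {F V : Type*} (sat : V → F → Prop) (rel : Set F → F → Prop) : Prop :=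
  ∃ μ : Set V → Set V,
    (∀ A ∈ defFam sat, μ A ⊆ A) ∧
    (∀ A ∈ defFam sat, ∀ B ∈ defFam sat, μ B ∩ A ⊆ μ A) ∧
    Set.univ \ μ Set.univ ∈ defFam sat ∧
    (∀ (Γ : Set F) (α : F), rel Γ α ↔ μ (modSet sat Γ) ⊆ modSet sat {α})

/-- `|~` is a closed pertinence consequence relation (closed `X`-logic): there is
`E ⊆ F` with `C_⊢(E) = E` such that `Γ |~ α` iff `C_⊢(Γ ∪ {α}) ∩ E ⊆ C_⊢(Γ)`. -/
def isClosedPertinence {F V : Type*} (sat : V → F → Prop)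
    (rel : Set F → F → Prop) : Prop :=
  ∃ E : Set F, cnsq sat E = E ∧
    ∀ (Γ : Set F) (α : F), rel Γ α ↔ cnsq sat (Γ ∪ {α}) ∩ E ⊆ cnsq sat Γ

lemma mem_modSet_singleton {F V : Type*} {sat : V → F → Prop} {v : V} {α : F} :
    v ∈ modSet sat {α} ↔ sat v α := by
  simp [modSet]

lemma mem_cnsq {F V : Type*} {sat : V → F → Prop} {Γ : Set F} {β : F} :
    β ∈ cnsq sat Γ ↔ modSet sat Γ ⊆ modSet sat {β} := Iff.rfl

lemma keyLemma {F V : Type*} (disj : F → F → F) (sat : V → F → Prop)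
    (hA4 : ∀ α β : F, modSet sat {disj α β} = modSet sat {α} ∪ modSet sat {β})
    (E : Set F) (W : Set V)
    (h1 : ∀ β ∈ E, W ⊆ modSet sat {β})
    (h2 : ∀ v ∉ W, ∃ δ, ¬ sat v δ ∧ ∀ α, disj α δ ∈ E)
    (Γ : Set F) (α : F) :
    (cnsq sat (Γ ∪ {α}) ∩ E ⊆ cnsq sat Γ) ↔ (modSet sat Γ \ W ⊆ modSet sat {α}) := by
  constructor
  · intro h v hv
    obtain ⟨hvΓ, hvW⟩ := hv
    obtain ⟨δ, hδ, hmem⟩ := h2 v hvW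
    have hβ : disj α δ ∈ cnsq sat (Γ ∪ {α}) ∩ E := by
      refine ⟨?_, hmem α⟩
      intro u hu
      rw [mem_modSet_singleton, ← mem_modSet_singleton (sat := sat), hA4]
      exact Or.inl (mem_modSet_singleton.mpr (hu α (Or.inr rfl)))
    have hc : v ∈ modSet sat {disj α δ} := (h hβ) hvΓ
    rw [hA4] at hc
    rcases hc with hc | hc
    · exact hc
    · exact absurd (mem_modSet_singleton.mp hc) hδ
  · intro h β hβ
    obtain ⟨hβ1, hβ2⟩ := hβ
    intro v hv
    by_cases hw : v ∈ W
    · exact h1 β hβ2 hw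
    · have hα : sat v α := mem_modSet_singleton.mp (h ⟨hv, hw⟩)
      refine hβ1 ?_
      intro γ hγ
      rcases hγ with hγ | hγ
      · exact hv γ hγ
      · rw [Set.mem_singleton_iff.mp hγ]; exact hα

lemma th_mod_th {F V : Type*} (sat : V → F → Prop) (W : Set V) :
    cnsq sat (thSet sat W) = thSet sat W := by
  ext β
  constructor
  · intro hβ v hv
    exact hβ fun γ hγ => mem_modSet_singleton.mp (hγ hv)
  · intro hβ v hv
    exact mem_modSet_singleton.mpr (hv β hβ)

/-- In a semantic structure satisfying `(A4)`, a relation `|~` is a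
universe-codefinable pivotal consequence relation iff it is a closed pertinence
consequence relation. -/
theorem stmt19 {F V : Type*} (disj : F → F → F) (sat : V → F → Prop)
    (hA4 : ∀ α β : F, modSet sat {disj α β} = modSet sat {α} ∪ modSet sat {β})
    (rel : Set F → F → Prop) :
    isPivotalUC sat rel ↔ isClosedPertinence sat rel := by
  constructor
  · rintro ⟨μ, hsub, hsc, ⟨Δ, hΔ⟩, hrel⟩
    set W : Set V := Set.univ \ μ Set.univ with hW
    have huniv : (Set.univ : Set V) ∈ defFam sat := ⟨∅, by simp [modSet]⟩
    have hmodD : ∀ Γ : Set F, modSet sat Γ ∈ defFam sat := fun Γ => ⟨Γ, rfl⟩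
    -- μ A = A \ W for definable A
    have hμ : ∀ Γ : Set F, μ (modSet sat Γ) = modSet sat Γ \ W := by
      intro Γ
      have h1 : μ (modSet sat Γ) ⊆ μ Set.univ :=
        fun v hv => hsc Set.univ huniv (modSet sat Γ) (hmodD Γ) ⟨hv, trivial⟩
      have h2 : μ Set.univ ∩ modSet sat Γ ⊆ μ (modSet sat Γ) :=
        hsc (modSet sat Γ) (hmodD Γ) Set.univ huniv
      ext v
      constructor
      · intro hv
        exact ⟨hsub _ (hmodD Γ) hv, fun hw => hw.2 (h1 hv)⟩
      · intro ⟨hv1, hv2⟩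
        have : v ∈ μ Set.univ := by
          by_contra hc
          exact hv2 ⟨trivial, hc⟩
        exact h2 ⟨this, hv1⟩
    refine ⟨thSet sat W, th_mod_th sat W, fun Γ α => ?_⟩
    rw [hrel, hμ]
    exact (keyLemma disj sat hA4 (thSet sat W) W (fun β hβ => hβ)
      (fun v hv => by
        rw [← hΔ] at hv
        simp only [modSet, Set.mem_setOf_eq, not_forall] at hv
        obtain ⟨δ, hδΔ, hδ⟩ := hv
        refine ⟨δ, hδ, fun α' => ?_⟩
        intro u hu
        rw [mem_modSet_singleton, ← mem_modSet_singleton (sat := sat), hA4]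
        rw [← hΔ] at hu
        exact Or.inr (mem_modSet_singleton.mpr (hu δ hδΔ))) Γ α).symm
  · rintro ⟨E, hE, hrel⟩
    refine ⟨fun A => A \ modSet sat E, fun A _ => Set.diff_subset,
      fun A _ B _ v hv => ⟨hv.2, hv.1.2⟩, ⟨E, ?_⟩, fun Γ α => ?_⟩
    · ext v; simp [modSet]
    · rw [hrel]
      exact keyLemma disj sat hA4 E (modSet sat E)
        (fun β hβ v hv => mem_modSet_singleton.mpr (hv β hβ))
        (fun v hv => by
          simp only [modSet, Set.mem_setOf_eq, not_forall] at hv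
          obtain ⟨δ, hδE, hδ⟩ := hv
          refine ⟨δ, hδ, fun α' => ?_⟩
          rw [← hE]
          intro u hu
          rw [mem_modSet_singleton, ← mem_modSet_singleton (sat := sat), hA4]
          exact Or.inr (mem_modSet_singleton.mpr (hu δ hδE))) Γ α
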